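/- Let n ≥ 1, k ≥ 1. The symmetric game subspace 𝒮_{[n;k]}, i.e., the linear subspace of all tuples (c_1, ..., c_n) of payoff functions c_i : (Fin n → Fin k) → ℝ satisfying c_i(x) = c_{σ(i)}(x ∘ σ⁻¹) for every permutation σ of Fin n, every i, and every strategy profile x, has dimension k · C(k+n−2, n−1) over ℝ. -/

import Mathlib

/-!
The payoff `c i x` of a symmetric game can only depend on what player `i` sees: its own strategy
`x i` and the multiset of strategies of the other players. Indeed, two situations `(i, x)` and
`(i', y)` with the same such view are related by a permutation of the players (match the fibres
of `x` and `y`, then correct by a transposition so that `i` goes to `i'`). Conversely every function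
of the view is a symmetric game, so `𝒮_{[n;k]} ≅ ℝ^(Fin k × Sym (Fin k) (n - 1))`, whose dimension
is `k · C(k + n - 2, n - 1)` by stars and bars.
-/

/-- The symmetric game subspace 𝒮_{[n;k]}: the subspace of all tuples of payoff
functions c_i : (Fin n → Fin k) → ℝ with c_i(x) = c_{σ(i)}(x ∘ σ⁻¹) for every
permutation σ, every player i and every strategy profile x. -/
def symGameSubspace (n k : ℕ) : Submodule ℝ (Fin n → (Fin n → Fin k) → ℝ) where
  carrier := { c | ∀ (σ : Equiv.Perm (Fin n)) (i : Fin n) (x : Fin n → Fin k),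
    c i x = c (σ i) (fun j => x (σ⁻¹ j)) }
  add_mem' := by
    intro c d hc hd σ i x
    simp only [Pi.add_apply, hc σ i x, hd σ i x]
  zero_mem' := by intro σ i x; rfl
  smul_mem' := by
    intro a c hc σ i x
    simp only [Pi.smul_apply, hc σ i x]

open Finset Function

theorem exists_perm_comp_eq_of_map_univ_eq {ι β : Type*} [Fintype ι] [DecidableEq β]
    {x y : ι → β} (h : univ.val.map x = univ.val.map y) : ∃ σ : Equiv.Perm ι, y ∘ σ = x := by
  have hfiber (b : β) : Fintype.card {i // x i = b} = Fintype.card {i // y i = b} := by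
    have := congrArg (Multiset.count b) h
    simp only [Multiset.count_map, @eq_comm _ b] at this
    simpa only [Fintype.card_subtype, card_def, filter_val] using this
  exact ⟨Equiv.ofFiberEquiv fun b => Fintype.equivOfCardEq (hfiber b),
    funext (Equiv.ofFiberEquiv_map _)⟩

theorem exists_perm_apply_eq_comp_eq_of_map_univ_eq {ι β : Type*} [Fintype ι] [DecidableEq ι]
    [DecidableEq β] {x y : ι → β} {i j : ι} (hij : x i = y j)
    (h : univ.val.map x = univ.val.map y) : ∃ σ : Equiv.Perm ι, σ i = j ∧ y ∘ σ = x := by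
  obtain ⟨σ, hσ⟩ := exists_perm_comp_eq_of_map_univ_eq h
  have hσi : y (σ i) = y j := by rw [← hij, ← hσ, comp_apply]
  have hswap : y ∘ Equiv.swap (σ i) j = y := by
    funext z
    rw [comp_apply, Equiv.swap_apply_def]
    split_ifs with h₁ h₂
    · rw [h₁, hσi]
    · rw [h₂, hσi]
    · rfl
  exact ⟨Equiv.swap (σ i) j * σ, by simp, by rw [Equiv.Perm.coe_mul, ← comp_assoc, hswap, hσ]⟩

theorem Multiset.exists_map_univ_eq {α : Type*} {n : ℕ} (s : Multiset α) (hs : card s = n) :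
    ∃ x : Fin n → α, univ.val.map x = s := by
  subst hs
  refine ⟨fun i => s.toList.get (i.cast (by simp)), ?_⟩
  rw [Fin.univ_val_map]
  conv_rhs => rw [← s.coe_toList, ← List.ofFn_get s.toList]
  congr 1
  exact List.ofFn_congr (by simp) _

theorem LinearMap.mem_range_funLeft_iff {R M α β : Type*} [Semiring R] [AddCommMonoid M]
    [Module R M] {φ : α → β} (hφ : Surjective φ) {f : α → M} :
    f ∈ range (funLeft R M φ) ↔ ∀ a b, φ a = φ b → f a = f b := by
  constructor
  · rintro ⟨g, rfl⟩ a b h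
    simp only [funLeft_apply, h]
  · exact fun hf => ⟨f ∘ surjInv hφ, funext fun a => hf _ _ (surjInv_eq hφ (φ a))⟩

def playerView {n k : ℕ} (i : Fin n) (x : Fin n → Fin k) : Fin k × Sym (Fin k) (n - 1) :=
  (x i, ⟨(univ.val.map x).erase (x i), by
    rw [Multiset.card_erase_of_mem (Multiset.mem_map_of_mem x (mem_univ i))]
    simp⟩)

theorem playerView_perm {n k : ℕ} (σ : Equiv.Perm (Fin n)) (i : Fin n) (x : Fin n → Fin k) :
    playerView (σ i) (fun j => x (σ⁻¹ j)) = playerView i x := by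
  have hmap : univ.val.map (fun j => x (σ⁻¹ j)) = univ.val.map x := by
    rw [← comp_def, ← Multiset.map_map, Multiset.map_univ_val_equiv]
  simp only [playerView, hmap]
  simp only [Equiv.Perm.coe_inv, Equiv.symm_apply_apply]

theorem exists_perm_of_playerView_eq {n k : ℕ} {i i' : Fin n} {x y : Fin n → Fin k}
    (h : playerView i x = playerView i' y) : ∃ σ : Equiv.Perm (Fin n), σ i = i' ∧ y ∘ σ = x := by
  have hij : x i = y i' := congrArg Prod.fst h
  have hothers : (univ.val.map x).erase (x i) = (univ.val.map y).erase (y i') :=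
    congrArg (fun v => v.2.1) h
  refine exists_perm_apply_eq_comp_eq_of_map_univ_eq hij ?_
  rw [← Multiset.cons_erase (Multiset.mem_map_of_mem x (mem_univ i)),
    ← Multiset.cons_erase (Multiset.mem_map_of_mem y (mem_univ i')), hothers, hij]

theorem playerView_surjective {n k : ℕ} (hn : 1 ≤ n) :
    Surjective (uncurry (playerView (n := n) (k := k))) := by
  rintro ⟨a, s⟩
  obtain ⟨x, hx⟩ := (a ::ₘ s.1).exists_map_univ_eq (n := n)
    (by rw [Multiset.card_cons, s.2]; omega)
  obtain ⟨i, -, hi⟩ := Multiset.mem_map.1 (hx ▸ Multiset.mem_cons_self a s.1)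
  refine ⟨(i, x), Prod.ext hi (Sym.coe_injective ?_)⟩
  simp only [uncurry_apply_pair, playerView, Sym.coe_mk, hx, hi, Multiset.erase_cons_head]
  rfl

theorem mem_symGameSubspace_iff {n k : ℕ} {c : Fin n → (Fin n → Fin k) → ℝ} :
    c ∈ symGameSubspace n k ↔
      ∀ i x i' y, playerView i x = playerView i' y → c i x = c i' y := by
  refine ⟨fun hc i x i' y h => ?_, fun hc σ i x => hc _ _ _ _ (playerView_perm σ i x).symm⟩
  obtain ⟨σ, rfl, rfl⟩ := exists_perm_of_playerView_eq h
  simpa using hc σ i (y ∘ σ)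

theorem symGameSubspace_eq_map_curry {n k : ℕ} (hn : 1 ≤ n) :
    symGameSubspace n k =
      (LinearMap.range (LinearMap.funLeft ℝ ℝ (uncurry (playerView (n := n) (k := k))))).map
        (LinearEquiv.curry ℝ ℝ _ _).toLinearMap := by
  ext c
  rw [Submodule.mem_map_equiv, LinearMap.mem_range_funLeft_iff (playerView_surjective hn),
    mem_symGameSubspace_iff]
  simp [Prod.forall]

theorem dim_symGameSubspace_general (n k : ℕ) (hn : 1 ≤ n) :
    Module.finrank ℝ (symGameSubspace n k) = k * (k + n - 2).choose (n - 1) := by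
  rw [symGameSubspace_eq_map_curry hn, LinearEquiv.finrank_map_eq,
    LinearMap.finrank_range_of_inj
      (LinearMap.funLeft_injective_of_surjective _ _ _ (playerView_surjective hn)),
    Module.finrank_fintype_fun_eq_card, Fintype.card_prod, Sym.card_sym_eq_choose,
    Fintype.card_fin]
  congr 2
  omega

/-- for n, k ≥ 1 the symmetric game subspace 𝒮_{[n;k]} has dimension
k · C(k+n−2, n−1) over ℝ. -/
theorem dim_symGameSubspace (n k : ℕ) (hn : 1 ≤ n) (hk : 1 ≤ k) :
    Module.finrank ℝ (symGameSubspace n k) = k * (k + n - 2).choose (n - 1) :=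
  dim_symGameSubspace_general n k hn
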